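/- Let ℬ ≤ M(n,𝔽) be a matrix space and let V ≤ 𝔽ⁿ be a subspace such that ℬ(V) ≤ V. If there exists a shrunk subspace for ℬ, then there also exists a shrunk subspace which is either contained in V or contains V. -/
import Mathlib


/-- The image `ℬ(U)` of a subspace `U ≤ 𝔽ⁿ` under a matrix space `ℬ ≤ M(n,𝔽)`. -/
def matImage {𝔽 : Type*} [Field 𝔽] {n : ℕ} (ℬ : Submodule 𝔽 (Matrix (Fin n) (Fin n) 𝔽))
    (U : Submodule 𝔽 (Fin n → 𝔽)) : Submodule 𝔽 (Fin n → 𝔽) :=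
  Submodule.span 𝔽 {v | ∃ B ∈ ℬ, ∃ u ∈ U, v = B.mulVec u}

/-- `U` is a shrunk subspace of `ℬ` if `dim(ℬ(U)) < dim U`. -/
def IsShrunk {𝔽 : Type*} [Field 𝔽] {n : ℕ} (ℬ : Submodule 𝔽 (Matrix (Fin n) (Fin n) 𝔽))
    (U : Submodule 𝔽 (Fin n → 𝔽)) : Prop :=
  Module.finrank 𝔽 (matImage ℬ U) < Module.finrank 𝔽 U

lemma matImage_mono {𝔽 : Type*} [Field 𝔽] {n : ℕ}
    (ℬ : Submodule 𝔽 (Matrix (Fin n) (Fin n) 𝔽)) {U U' : Submodule 𝔽 (Fin n → 𝔽)}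
    (h : U ≤ U') : matImage ℬ U ≤ matImage ℬ U' :=
  Submodule.span_mono (fun _ ⟨B, hB, u, hu, hv⟩ => ⟨B, hB, u, h hu, hv⟩)

lemma matImage_sup_le {𝔽 : Type*} [Field 𝔽] {n : ℕ}
    (ℬ : Submodule 𝔽 (Matrix (Fin n) (Fin n) 𝔽)) (U V : Submodule 𝔽 (Fin n → 𝔽)) :
    matImage ℬ (U ⊔ V) ≤ matImage ℬ U ⊔ matImage ℬ V := by
  rw [matImage, Submodule.span_le]
  rintro v ⟨B, hB, u, hu, rfl⟩
  obtain ⟨x, hx, y, hy, rfl⟩ := Submodule.mem_sup.mp hu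
  rw [Matrix.mulVec_add]
  exact Submodule.add_mem_sup (Submodule.subset_span ⟨B, hB, x, hx, rfl⟩)
    (Submodule.subset_span ⟨B, hB, y, hy, rfl⟩)

/-- If `ℬ(V) ≤ V` and `ℬ` has a shrunk subspace, then it has one comparable with `V`. -/
theorem shrunk_subspace_comparable_with_invariant {𝔽 : Type*} [Field 𝔽] {n : ℕ}
    (ℬ : Submodule 𝔽 (Matrix (Fin n) (Fin n) 𝔽)) (V : Submodule 𝔽 (Fin n → 𝔽))
    (hV : matImage ℬ V ≤ V) (h : ∃ U : Submodule 𝔽 (Fin n → 𝔽), IsShrunk ℬ U) :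
    ∃ W : Submodule 𝔽 (Fin n → 𝔽), IsShrunk ℬ W ∧ (W ≤ V ∨ V ≤ W) := by
  classical
  obtain ⟨U, hU⟩ := h
  set X := matImage ℬ U with hX
  have h1 : matImage ℬ (U ⊓ V) ≤ X ⊓ V :=
    le_inf (matImage_mono ℬ inf_le_left) ((matImage_mono ℬ inf_le_right).trans hV)
  have h2 : matImage ℬ (U ⊔ V) ≤ X ⊔ V :=
    (matImage_sup_le ℬ U V).trans (sup_le_sup_left hV _ |>.trans (le_refl _) |> fun t => t)
  have key1 : Module.finrank 𝔽 ↥(X ⊔ V) + Module.finrank 𝔽 ↥(X ⊓ V)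
      = Module.finrank 𝔽 X + Module.finrank 𝔽 V :=
    Submodule.finrank_sup_add_finrank_inf_eq X V
  have key2 : Module.finrank 𝔽 ↥(U ⊔ V) + Module.finrank 𝔽 ↥(U ⊓ V)
      = Module.finrank 𝔽 U + Module.finrank 𝔽 V :=
    Submodule.finrank_sup_add_finrank_inf_eq U V
  have m1 : Module.finrank 𝔽 ↥(matImage ℬ (U ⊓ V)) ≤ Module.finrank 𝔽 ↥(X ⊓ V) :=
    Submodule.finrank_mono h1
  have m2 : Module.finrank 𝔽 ↥(matImage ℬ (U ⊔ V)) ≤ Module.finrank 𝔽 ↥(X ⊔ V) :=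
    Submodule.finrank_mono h2
  have hUlt : Module.finrank 𝔽 X < Module.finrank 𝔽 U := hU
  by_contra hc
  push_neg at hc
  have c1 := hc (U ⊓ V)
  have c2 := hc (U ⊔ V)
  have n1 : ¬ IsShrunk ℬ (U ⊓ V) := fun hs => (c1 hs).1 inf_le_right
  have n2 : ¬ IsShrunk ℬ (U ⊔ V) := fun hs => (c2 hs).2 le_sup_right
  unfold IsShrunk at n1 n2
  omega
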